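/- arXiv:2402.12533 — 4 statements merged into one kernel-verified Lean document; each statement's English description precedes it below -/
import Mathlib

section
/- Assume Σ₁ has positive Lebesgue measure. Then there exists a constant C > 0 such that for every measurable function u : ℝ^N → ℝ with u = 0 almost everywhere in Σ₁, one has ∫_Ω |u(x)|² dx ≤ C · ∫∫_D |u(x)−u(y)|²/|x−y|^{N+2s} dx dy (a fractional Poincaré inequality on the exterior-Dirichlet subspace; this is the nontrivial half of the norm equivalence of Proposition 2.1 and the source of coercivity of the energy J). -/
open MeasureTheory Set Filter Topology

noncomputable section

abbrev EN (N : ℕ) := EuclideanSpace ℝ (Fin N)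

def CNs (N : ℕ) (s : ℝ) : ℝ :=
  s * 4 ^ s * Real.Gamma ((2 * s + N) / 2) / (Real.pi ^ ((N : ℝ) / 2) * Real.Gamma (1 - s))

def gagK (N : ℕ) (s : ℝ) (u v : EN N → ℝ) (p : EN N × EN N) : ℝ :=
  (u p.1 - u p.2) * (v p.1 - v p.2) / ‖p.1 - p.2‖ ^ ((N : ℝ) + 2 * s)

def DSet (N : ℕ) (Ω : Set (EN N)) : Set (EN N × EN N) :=
  (Ω ×ˢ Ω) ∪ (Ω ×ˢ Ωᶜ) ∪ (Ωᶜ ×ˢ Ω)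

def memWs2 (N : ℕ) (s : ℝ) (u : EN N → ℝ) : Prop :=
  Measurable u ∧ MemLp u 2 (volume : Measure (EN N)) ∧
    (∫⁻ p : EN N × EN N, ENNReal.ofReal ((u p.1 - u p.2) ^ 2 / ‖p.1 - p.2‖ ^ ((N : ℝ) + 2 * s))) < ⊤

def Ns (N : ℕ) (s : ℝ) (Ω : Set (EN N)) (u : EN N → ℝ) (x : EN N) : ℝ :=
  CNs N s * ∫ y in Ω, (u x - u y) / ‖x - y‖ ^ ((N : ℝ) + 2 * s)

def EnergyE (N : ℕ) (s : ℝ) (Ω : Set (EN N)) (u v : EN N → ℝ) : ℝ :=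
  (CNs N s / 2) * ∫ p in DSet N Ω, gagK N s u v p

def Jfun (N : ℕ) (s : ℝ) (Ω : Set (EN N)) (f : EN N → ℝ) (w : EN N → ℝ) : ℝ :=
  (CNs N s / 4) * (∫ p in DSet N Ω, (w p.1 - w p.2) ^ 2 / ‖p.1 - p.2‖ ^ ((N : ℝ) + 2 * s))
    - ∫ x in Ω, f x * w x

def K0 (N : ℕ) (s : ℝ) (S1 S2 : Set (EN N)) (φ : EN N → ℝ) : Set (EN N → ℝ) :=
  {w | memWs2 N s w ∧ (∀ᵐ x ∂(volume.restrict S1), w x = 0) ∧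
       ∀ᵐ x ∂(volume.restrict S2), w x ≤ φ x}

/-- fractional Poincaré inequality on the exterior-Dirichlet subspace. -/
theorem stmt_0 (N : ℕ) (hN : 1 ≤ N) (Ω : Set (EN N)) (hΩo : IsOpen Ω)
    (hΩb : Bornology.IsBounded Ω) (s : ℝ) (hs : s ∈ Set.Ioo (0 : ℝ) 1)
    (S1 S2 : Set (EN N)) (hS1o : IsOpen S1) (hS2o : IsOpen S2)
    (hS1 : S1 ⊆ (closure Ω)ᶜ) (hS2 : S2 ⊆ (closure Ω)ᶜ)
    (hdisj : S1 ∩ S2 = ∅) (hcover : closure S1 ∪ closure S2 = Ωᶜ)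
    (hS1pos : 0 < volume S1) :
    ∃ C > (0 : ℝ), ∀ u : EN N → ℝ, Measurable u →
      (∀ᵐ x ∂(volume.restrict S1), u x = 0) →
      (∫⁻ x in Ω, ENNReal.ofReal ((u x) ^ 2)) ≤
        ENNReal.ofReal C *
          ∫⁻ p in DSet N Ω,
            ENNReal.ofReal ((u p.1 - u p.2) ^ 2 / ‖p.1 - p.2‖ ^ ((N : ℝ) + 2 * s)) := by
  set c : ℝ := (N : ℝ) + 2 * s with hc_def
  have hc : 0 < c := by
    have h1 : (1:ℝ) ≤ (N:ℝ) := by exact_mod_cast hN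
    nlinarith [hs.1]
  -- choose n with positive measure of S1 ∩ ball
  have hball : ∃ n : ℕ, 0 < volume (S1 ∩ Metric.ball (0 : EN N) n) := by
    by_contra h
    push_neg at h
    have hz : ∀ n : ℕ, volume (S1 ∩ Metric.ball (0 : EN N) n) = 0 := fun n =>
      le_antisymm (h n) zero_le
    have hsub : S1 ⊆ ⋃ n : ℕ, S1 ∩ Metric.ball (0 : EN N) n := by
      intro y hy
      obtain ⟨n, hn⟩ := exists_nat_gt ‖y‖
      exact mem_iUnion.2 ⟨n, hy, by simpa [Metric.mem_ball, dist_eq_norm] using hn⟩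
    have hle : volume S1 ≤ 0 := by
      calc volume S1 ≤ volume (⋃ n : ℕ, S1 ∩ Metric.ball (0 : EN N) n) := measure_mono hsub
        _ ≤ ∑' n : ℕ, volume (S1 ∩ Metric.ball (0 : EN N) n) := measure_iUnion_le _
        _ = 0 := by simp [hz]
    exact absurd hS1pos (by simpa using (LE.le.not_gt hle))
  obtain ⟨n, hA⟩ := hball
  obtain ⟨r0, hr0⟩ := hΩb.subset_ball 0
  set r : ℝ := max r0 (n : ℝ) + 1 with hr_def
  have hrn : (n : ℝ) ≤ r := le_trans (le_max_right r0 (n : ℝ)) (by linarith)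
  have hrr0 : r0 ≤ r := le_trans (le_max_left r0 (n : ℝ)) (by linarith)
  have hrpos : 0 < r := by
    have : (0:ℝ) ≤ (n:ℝ) := Nat.cast_nonneg n
    have := le_max_right r0 (n:ℝ)
    linarith
  set A : Set (EN N) := S1 ∩ Metric.ball (0 : EN N) n with hA_def
  have hAm : MeasurableSet A := (hS1o.measurableSet).inter Metric.isOpen_ball.measurableSet
  have hAfin : volume A < ⊤ :=
    lt_of_le_of_lt (measure_mono (inter_subset_right)) measure_ball_lt_top
  have hAS1 : A ⊆ S1 := inter_subset_left
  have hAball : A ⊆ Metric.ball (0 : EN N) r :=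
    inter_subset_right.trans (Metric.ball_subset_ball hrn)
  have hAc : A ⊆ Ωᶜ := fun y hy => fun hyΩ => hS1 (hAS1 hy) (subset_closure hyΩ)
  have hΩball : Ω ⊆ Metric.ball (0 : EN N) r := hr0.trans (Metric.ball_subset_ball hrr0)
  set a : ENNReal := volume A with ha_def
  have ha0 : a ≠ 0 := hA.ne'
  have hatop : a ≠ ⊤ := hAfin.ne
  set K : ENNReal := ENNReal.ofReal ((2 * r) ^ c) with hK_def
  have h2rpos : (0:ℝ) < (2 * r) ^ c := Real.rpow_pos_of_pos (by linarith) c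
  have hK0 : K ≠ 0 := (ENNReal.ofReal_pos.2 h2rpos).ne'
  have hKtop : K ≠ ⊤ := ENNReal.ofReal_ne_top
  refine ⟨(2 * r) ^ c / (volume A).toReal, div_pos h2rpos (ENNReal.toReal_pos ha0 hatop), ?_⟩
  intro u hu hu0
  set g : EN N × EN N → ENNReal :=
    fun p => ENNReal.ofReal ((u p.1 - u p.2) ^ 2 / ‖p.1 - p.2‖ ^ c) with hg_def
  have hg : Measurable g := by
    apply Measurable.ennreal_ofReal
    exact (((hu.comp measurable_fst).sub (hu.comp measurable_snd)).pow_const 2).div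
      ((continuous_fst.sub continuous_snd).norm.rpow_const (fun _ => Or.inr hc.le)).measurable
  have hfmeas : Measurable (fun x : EN N => ENNReal.ofReal (u x ^ 2)) :=
    (hu.pow_const 2).ennreal_ofReal
  set J : ENNReal := ∫⁻ x in Ω, ENNReal.ofReal (u x ^ 2) with hJ_def
  set I : ENNReal := ∫⁻ p in DSet N Ω, g p with hI_def
  have hsubD : Ω ×ˢ A ⊆ DSet N Ω := by
    intro p hp
    exact Or.inl (Or.inr ⟨hp.1, hAc hp.2⟩)
  -- main chain
  have key : J / K * a ≤ I := by
    have h4 : ∫⁻ x in Ω, ENNReal.ofReal (u x ^ 2) * (K⁻¹ * a) = J / K * a := by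
      rw [lintegral_mul_const _ hfmeas, div_eq_mul_inv, mul_assoc]
    have h3 : ∀ᵐ x ∂(volume.restrict Ω),
        ENNReal.ofReal (u x ^ 2) * (K⁻¹ * a) ≤ ∫⁻ y in A, g (x, y) := by
      filter_upwards [ae_restrict_mem hΩo.measurableSet] with x hx
      have hy0 : ∀ᵐ y ∂(volume.restrict A), u y = 0 :=
        ae_restrict_of_ae_restrict_of_subset hAS1 hu0
      have hx_ball := hΩball hx
      calc ENNReal.ofReal (u x ^ 2) * (K⁻¹ * a)
          = ENNReal.ofReal (u x ^ 2 / (2 * r) ^ c) * a := by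
            rw [ENNReal.ofReal_div_of_pos h2rpos, div_eq_mul_inv, mul_assoc]
        _ = ∫⁻ _ in A, ENNReal.ofReal (u x ^ 2 / (2 * r) ^ c) :=
            (setLIntegral_const A _).symm
        _ ≤ ∫⁻ y in A, g (x, y) := by
            apply lintegral_mono_ae
            filter_upwards [hy0, ae_restrict_mem hAm] with y h0 hyA
            have hxy : x ≠ y := by
              intro h
              exact hAc hyA (h ▸ hx)
            have hnorm_pos : (0:ℝ) < ‖x - y‖ := by
              rw [norm_pos_iff]
              exact sub_ne_zero.2 hxy
            have hnorm_le : ‖x - y‖ ≤ 2 * r := by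
              have h1 : ‖x‖ < r := by
                simpa [Metric.mem_ball, dist_eq_norm] using hx_ball
              have h2 : ‖y‖ < r := by
                simpa [Metric.mem_ball, dist_eq_norm] using hAball hyA
              calc ‖x - y‖ ≤ ‖x‖ + ‖y‖ := norm_sub_le x y
                _ ≤ 2 * r := by linarith
            have hpow_pos : (0:ℝ) < ‖x - y‖ ^ c := Real.rpow_pos_of_pos hnorm_pos c
            have hpow_le : ‖x - y‖ ^ c ≤ (2 * r) ^ c :=
              Real.rpow_le_rpow hnorm_pos.le hnorm_le hc.le
            apply ENNReal.ofReal_le_ofReal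
            show u x ^ 2 / (2 * r) ^ c ≤ (u x - u y) ^ 2 / ‖x - y‖ ^ c
            rw [h0, sub_zero]
            exact div_le_div_of_nonneg_left (sq_nonneg (u x)) hpow_pos hpow_le
    have h2 : ∫⁻ p in Ω ×ˢ A, g p = ∫⁻ x in Ω, ∫⁻ y in A, g (x, y) := by
      have hprod : (volume : Measure (EN N × EN N)).restrict (Ω ×ˢ A) =
          (volume.restrict Ω).prod (volume.restrict A) := by
        rw [Measure.volume_eq_prod, Measure.prod_restrict]
      rw [hprod, lintegral_prod _ hg.aemeasurable]
    calc J / K * a = ∫⁻ x in Ω, ENNReal.ofReal (u x ^ 2) * (K⁻¹ * a) := h4.symm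
      _ ≤ ∫⁻ x in Ω, ∫⁻ y in A, g (x, y) := lintegral_mono_ae h3
      _ = ∫⁻ p in Ω ×ˢ A, g p := h2.symm
      _ ≤ I := lintegral_mono' (Measure.restrict_mono hsubD le_rfl) le_rfl
  have hofC : ENNReal.ofReal ((2 * r) ^ c / (volume A).toReal) = K / a := by
    rw [ENNReal.ofReal_div_of_pos (ENNReal.toReal_pos ha0 hatop), ENNReal.ofReal_toReal hatop]
  have hJa : K / a * (J / K * a) = J := by
    rw [div_eq_mul_inv, div_eq_mul_inv]
    calc K * a⁻¹ * (J * K⁻¹ * a) = J * (K * K⁻¹) * (a * a⁻¹) := by ring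
      _ = J := by
        rw [ENNReal.mul_inv_cancel hK0 hKtop, ENNReal.mul_inv_cancel ha0 hatop, mul_one, mul_one]
  calc J = K / a * (J / K * a) := hJa.symm
    _ ≤ K / a * I := mul_le_mul_right key _
    _ = ENNReal.ofReal ((2 * r) ^ c / (volume A).toReal) * I := by rw [hofC]


end
end

section
/- Let w ∈ W^{s,2}(ℝ^N) and let ψ be a smooth function whose compact support is contained in Σ₂. Then E(w, ψ) = ∫_{Σ₂} ψ(x)·N_s w(x) dx, where both sides converge absolutely. (This is the identity established in Step 3 of the proof of Proposition 3.3, from which the condition (−Δ)^s w = 0 in D(Σ₂)* is derived.) -/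
open MeasureTheory Set Filter Topology

noncomputable section

/-- `E(w, ψ) = ∫_{Σ₂} ψ · N_s w` for smooth `ψ` compactly supported in `Σ₂`. -/
theorem stmt_4 (N : ℕ) (hN : 1 ≤ N) (Ω : Set (EN N)) (hΩo : IsOpen Ω)
    (hΩb : Bornology.IsBounded Ω) (s : ℝ) (hs : s ∈ Set.Ioo (0 : ℝ) 1)
    (S1 S2 : Set (EN N)) (hS1o : IsOpen S1) (hS2o : IsOpen S2)
    (hS1 : S1 ⊆ (closure Ω)ᶜ) (hS2 : S2 ⊆ (closure Ω)ᶜ)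
    (hdisj : S1 ∩ S2 = ∅) (hcover : closure S1 ∪ closure S2 = Ωᶜ)
    (w : EN N → ℝ) (hw : memWs2 N s w)
    (ψ : EN N → ℝ) (hψsmooth : ContDiff ℝ (⊤ : ℕ∞) ψ) (hψcpt : HasCompactSupport ψ)
    (hψsupp : tsupport ψ ⊆ S2) :
    IntegrableOn (gagK N s w ψ) (DSet N Ω) volume ∧
    IntegrableOn (fun x => ψ x * Ns N s Ω w x) S2 volume ∧
    EnergyE N s Ω w ψ = ∫ x in S2, ψ x * Ns N s Ω w x := by
  obtain ⟨hs0, hs1⟩ := hs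
  have hwm : Measurable w := hw.1
  have he0 : (0 : ℝ) ≤ (N : ℝ) + 2 * s := by positivity
  have hΩm : MeasurableSet Ω := hΩo.measurableSet
  have hΩcm : MeasurableSet (Ωᶜ : Set (EN N)) := hΩm.compl
  have hS2Ωc : S2 ⊆ (Ωᶜ : Set (EN N)) := fun x hx hxΩ => hS2 hx (subset_closure hxΩ)
  have hψ0 : ∀ x ∈ closure Ω, ψ x = 0 := fun x hx =>
    image_eq_zero_of_notMem_tsupport fun hmem => hS2 (hψsupp hmem) hx
  have hψΩ : ∀ x ∈ Ω, ψ x = 0 := fun x hx => hψ0 x (subset_closure hx)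
  set T := tsupport ψ with hT
  have hTm : MeasurableSet T := (isClosed_tsupport ψ).measurableSet
  have hTfin : volume T < ⊤ := hψcpt.measure_lt_top
  have hΩfin : volume Ω < ⊤ := hΩb.measure_lt_top
  haveI : IsFiniteMeasure (volume.restrict Ω) := ⟨by rwa [Measure.restrict_apply_univ]⟩
  haveI : IsFiniteMeasure (volume.restrict T) := ⟨by rwa [Measure.restrict_apply_univ]⟩
  -- a positive distance between `T` and `closure Ω`
  obtain ⟨r, hr0, hr⟩ := EMetric.exists_pos_forall_lt_edist hψcpt isClosed_closure
    (Set.disjoint_left.mpr fun x hx => hS2 (hψsupp hx))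
  set δ : ℝ := (r : ℝ) with hδdef
  have hδ0 : (0 : ℝ) < δ := hr0
  have hdist : ∀ x ∈ T, ∀ y ∈ Ω, δ ≤ ‖x - y‖ := by
    intro x hx y hy
    have h := hr x hx y (subset_closure hy)
    rw [edist_dist] at h
    have h2 : ENNReal.ofReal δ < ENNReal.ofReal (dist x y) := by
      rwa [hδdef, ENNReal.ofReal_coe_nnreal]
    rw [← dist_eq_norm]
    exact ((ENNReal.ofReal_lt_ofReal_iff_of_nonneg hδ0.le).mp h2).le
  -- bound for ψ
  obtain ⟨M, hM⟩ := hψcpt.exists_bound_of_continuous hψsmooth.continuous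
  have hM0 : 0 ≤ M := le_trans (norm_nonneg _) (hM 0)
  set c : ℝ := M / δ ^ ((N : ℝ) + 2 * s) with hcdef
  have hδe0 : (0 : ℝ) < δ ^ ((N : ℝ) + 2 * s) := Real.rpow_pos_of_pos hδ0 _
  have hc0 : 0 ≤ c := div_nonneg hM0 hδe0.le
  -- the function F and measures
  set F : EN N × EN N → ℝ :=
    fun p => ψ p.1 * (w p.1 - w p.2) / ‖p.1 - p.2‖ ^ ((N : ℝ) + 2 * s) with hFdef
  have hk : Continuous (fun p : EN N × EN N => ‖p.1 - p.2‖ ^ ((N : ℝ) + 2 * s)) :=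
    (Real.continuous_rpow_const he0).comp ((continuous_fst.sub continuous_snd).norm)
  have hFm : Measurable F :=
    ((hψsmooth.continuous.measurable.comp measurable_fst).mul
      ((hwm.comp measurable_fst).sub (hwm.comp measurable_snd))).div hk.measurable
  set μ1 := (volume.restrict (Ωᶜ : Set (EN N))).prod (volume.restrict Ω) with hμ1
  set μ2 := (volume.restrict Ω).prod (volume.restrict (Ωᶜ : Set (EN N))) with hμ2
  have hres1 : volume.restrict ((Ωᶜ : Set (EN N)) ×ˢ Ω) = μ1 := by
    rw [hμ1, Measure.prod_restrict, ← Measure.volume_eq_prod]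
  have hres2 : volume.restrict (Ω ×ˢ (Ωᶜ : Set (EN N))) = μ2 := by
    rw [hμ2, Measure.prod_restrict, ← Measure.volume_eq_prod]
  -- the dominating function
  set G : EN N → ℝ := T.indicator fun _ => c with hGdef
  have hwΩ : Integrable w (volume.restrict Ω) := (hw.2.1.restrict Ω).integrable one_le_two
  have hf1 : Integrable (fun x => G x * |w x|) (volume : Measure (EN N)) := by
    have h1 : IntegrableOn (fun x => c * |w x|) T volume :=
      (((hw.2.1.restrict T).integrable one_le_two).abs.const_mul c)
    have h2 := (integrable_indicator_iff hTm).mpr h1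
    refine h2.congr (ae_of_all _ fun x => ?_)
    by_cases hx : x ∈ T <;>
      simp [hGdef, Set.indicator_of_mem, Set.indicator_of_notMem, hx]
  have hGint : Integrable G (volume : Measure (EN N)) := by
    rw [hGdef]
    exact (integrable_indicator_iff hTm).mpr ((integrableOn_const_iff (C := c)).mpr (Or.inr hTfin))
  have hBint : Integrable (fun p : EN N × EN N => G p.1 * |w p.1| + G p.1 * |w p.2|) μ1 := by
    apply Integrable.add
    · have h2 : Integrable (fun _ : EN N => (1 : ℝ)) (volume.restrict Ω) := integrable_const _
      have := (hf1.restrict (s := Ωᶜ)).mul_prod h2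
      rw [hμ1]
      simpa using this
    · exact (hGint.restrict (s := Ωᶜ)).mul_prod hwΩ.abs
  -- the pointwise bound
  have hFae : ∀ᵐ p ∂μ1, ‖F p‖ ≤ G p.1 * |w p.1| + G p.1 * |w p.2| := by
    rw [← hres1]
    filter_upwards [ae_restrict_mem (hΩcm.prod hΩm)] with p hp
    obtain ⟨hp1, hp2⟩ := hp
    by_cases hx : p.1 ∈ T
    · have hd : δ ≤ ‖p.1 - p.2‖ := hdist _ hx _ hp2
      have hde : δ ^ ((N : ℝ) + 2 * s) ≤ ‖p.1 - p.2‖ ^ ((N : ℝ) + 2 * s) :=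
        Real.rpow_le_rpow hδ0.le hd he0
      have hnum : |ψ p.1| * |w p.1 - w p.2| ≤ M * (|w p.1| + |w p.2|) :=
        mul_le_mul (by simpa [Real.norm_eq_abs] using hM p.1) (abs_sub _ _)
          (abs_nonneg _) hM0
      have habs : |‖p.1 - p.2‖ ^ ((N : ℝ) + 2 * s)| = ‖p.1 - p.2‖ ^ ((N : ℝ) + 2 * s) :=
        abs_of_nonneg (Real.rpow_nonneg (norm_nonneg _) _)
      rw [Real.norm_eq_abs, hFdef]
      simp only [abs_div, abs_mul, habs]
      calc |ψ p.1| * |w p.1 - w p.2| / ‖p.1 - p.2‖ ^ ((N : ℝ) + 2 * s)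
          ≤ M * (|w p.1| + |w p.2|) / δ ^ ((N : ℝ) + 2 * s) :=
            div_le_div₀ (by positivity) hnum hδe0 hde
        _ = G p.1 * |w p.1| + G p.1 * |w p.2| := by
            rw [hGdef]
            simp only [Set.indicator_of_mem hx, hcdef]
            ring
    · have hz : ψ p.1 = 0 := image_eq_zero_of_notMem_tsupport hx
      rw [hGdef]
      simp [hFdef, hz, Set.indicator_of_notMem hx]
  have hFint : Integrable F μ1 := hBint.mono' hFm.aestronglyMeasurable hFae
  -- swap
  have hswap : MeasurePreserving Prod.swap μ2 μ1 := Measure.measurePreserving_swap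
  have hemb := (MeasurableEquiv.prodComm : EN N × EN N ≃ᵐ EN N × EN N).measurableEmbedding
  have hFswapint : Integrable (fun p : EN N × EN N => F p.swap) μ2 := by
    have h := hFint
    rw [← hswap.map_eq] at h
    exact (MeasurableEmbedding.integrable_map_iff hemb).mp h
  have hswapeq : (∫ p, F p.swap ∂μ2) = ∫ p, F p ∂μ1 := hswap.integral_comp hemb F
  -- identification of gagK on the pieces
  have hgag1 : gagK N s w ψ =ᵐ[μ1] F := by
    rw [← hres1]
    filter_upwards [ae_restrict_mem (hΩcm.prod hΩm)] with p hp
    obtain ⟨hp1, hp2⟩ := hp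
    simp only [gagK, hFdef, hψΩ p.2 hp2]
    ring
  have hgag2 : gagK N s w ψ =ᵐ[μ2] fun p => F p.swap := by
    rw [← hres2]
    filter_upwards [ae_restrict_mem (hΩm.prod hΩcm)] with p hp
    obtain ⟨hp1, hp2⟩ := hp
    simp only [gagK, hFdef, hψΩ p.1 hp1, Prod.fst_swap, Prod.snd_swap]
    rw [norm_sub_rev]
    ring
  have hgag0 : gagK N s w ψ =ᵐ[volume.restrict (Ω ×ˢ Ω)] fun _ => (0 : ℝ) := by
    filter_upwards [ae_restrict_mem (hΩm.prod hΩm)] with p hp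
    obtain ⟨hp1, hp2⟩ := hp
    simp [gagK, hψΩ p.1 hp1, hψΩ p.2 hp2]
  -- integrability on the pieces
  have hI0 : IntegrableOn (gagK N s w ψ) (Ω ×ˢ Ω) volume :=
    (integrable_zero _ _ _).congr hgag0.symm
  have hI1 : IntegrableOn (gagK N s w ψ) ((Ωᶜ : Set (EN N)) ×ˢ Ω) volume := by
    rw [IntegrableOn, hres1]
    exact hFint.congr hgag1.symm
  have hI2 : IntegrableOn (gagK N s w ψ) (Ω ×ˢ (Ωᶜ : Set (EN N))) volume := by
    rw [IntegrableOn, hres2]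
    exact hFswapint.congr hgag2.symm
  have hIfull : IntegrableOn (gagK N s w ψ) (DSet N Ω) volume := by
    rw [DSet]
    exact (hI0.union hI2).union hI1
  -- disjointness
  have hdisj1 : Disjoint (Ω ×ˢ Ω) (Ω ×ˢ (Ωᶜ : Set (EN N))) := by
    rw [Set.disjoint_left]
    rintro ⟨x, y⟩ ⟨-, hy⟩ ⟨-, hy'⟩
    exact hy' hy
  have hdisj2 : Disjoint ((Ω ×ˢ Ω) ∪ (Ω ×ˢ (Ωᶜ : Set (EN N)))) ((Ωᶜ : Set (EN N)) ×ˢ Ω) := by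
    rw [Set.disjoint_left]
    rintro ⟨x, y⟩ hp ⟨hx', -⟩
    rcases hp with ⟨hx, -⟩ | ⟨hx, -⟩ <;> exact hx' hx
  -- integral splitting
  have hsplit : (∫ p in DSet N Ω, gagK N s w ψ p) = 2 * ∫ p, F p ∂μ1 := by
    rw [DSet, setIntegral_union hdisj2 (hΩcm.prod hΩm) (hI0.union hI2) hI1,
      setIntegral_union hdisj1 (hΩm.prod hΩcm) hI0 hI2]
    have e0 : (∫ p in Ω ×ˢ Ω, gagK N s w ψ p) = 0 := by
      rw [integral_congr_ae hgag0, integral_zero]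
    have e2 : (∫ p in Ω ×ˢ (Ωᶜ : Set (EN N)), gagK N s w ψ p) = ∫ p, F p ∂μ1 := by
      rw [show (∫ p in Ω ×ˢ (Ωᶜ : Set (EN N)), gagK N s w ψ p) = ∫ p, gagK N s w ψ p ∂μ2 by
        rw [hres2], integral_congr_ae hgag2, hswapeq]
    have e1 : (∫ p in (Ωᶜ : Set (EN N)) ×ˢ Ω, gagK N s w ψ p) = ∫ p, F p ∂μ1 := by
      rw [show (∫ p in (Ωᶜ : Set (EN N)) ×ˢ Ω, gagK N s w ψ p) = ∫ p, gagK N s w ψ p ∂μ1 by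
        rw [hres1], integral_congr_ae hgag1]
    rw [e0, e1, e2]
    ring
  -- Fubini
  have hfub : (∫ p, F p ∂μ1)
      = ∫ x in (Ωᶜ : Set (EN N)), ∫ y in Ω, F (x, y) := by
    rw [hμ1, integral_prod F hFint]
  -- relation with Ns
  have hNsid : ∀ x, ψ x * Ns N s Ω w x = CNs N s * ∫ y in Ω, F (x, y) := by
    intro x
    have : (∫ y in Ω, F (x, y))
        = ψ x * ∫ y in Ω, (w x - w y) / ‖x - y‖ ^ ((N : ℝ) + 2 * s) := by
      rw [← integral_const_mul]
      exact integral_congr_ae (ae_of_all _ fun y => (mul_div_assoc _ _ _))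
    rw [this, Ns]
    ring
  -- integrability of ψ * Ns on Ωᶜ (hence on S2)
  have hOcint : IntegrableOn (fun x => ψ x * Ns N s Ω w x) (Ωᶜ : Set (EN N)) volume := by
    have h := hFint.integral_prod_left
    exact (h.const_mul (CNs N s)).congr (ae_of_all _ fun x => (hNsid x).symm)
  have hS2int : IntegrableOn (fun x => ψ x * Ns N s Ω w x) S2 volume :=
    hOcint.mono_set hS2Ωc
  refine ⟨hIfull, hS2int, ?_⟩
  -- the final identity
  have hmain : EnergyE N s Ω w ψ = ∫ x in (Ωᶜ : Set (EN N)), ψ x * Ns N s Ω w x := by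
    rw [EnergyE, hsplit, hfub]
    rw [show (CNs N s / 2) * (2 * ∫ x in (Ωᶜ : Set (EN N)), ∫ y in Ω, F (x, y))
        = CNs N s * ∫ x in (Ωᶜ : Set (EN N)), ∫ y in Ω, F (x, y) by ring,
      ← integral_const_mul]
    exact integral_congr_ae (ae_of_all _ fun x => (hNsid x).symm)
  rw [hmain]
  refine setIntegral_eq_of_subset_of_ae_diff_eq_zero hΩcm.nullMeasurableSet hS2Ωc
    (ae_of_all _ fun x hx => ?_)
  have : ψ x = 0 := image_eq_zero_of_notMem_tsupport fun hmem => hx.2 (hψsupp hmem)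
  rw [this, zero_mul]

end
end

section
/- Uniform bound and constraint-violation estimate for penalized minimizers (proved in Proposition 4.1): assume Σ₁ has positive Lebesgue measure and K₀ ≠ ∅, and for each ε > 0 let w_ε minimize J_ε over V₀ := { w ∈ W^{s,2}(ℝ^N) : w = 0 a.e. in Σ₁ }. Then: (i) for every v ∈ K₀ and every ε > 0, ∫_{Σ₂} ((w_ε − φ)⁺)² dx ≤ 2ε²·(J(v) − J(w_ε)); and (ii) there is a constant C > 0 independent of ε such that for all ε ∈ (0,1], ∫∫_D |w_ε(x)−w_ε(y)|²/|x−y|^{N+2s} dx dy ≤ C and ∫_{Σ₂} ((w_ε − φ)⁺)² dx ≤ C·ε². -/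
open MeasureTheory Set Filter Topology
open scoped ENNReal

noncomputable section

def V0 (N : ℕ) (s : ℝ) (S1 : Set (EN N)) : Set (EN N → ℝ) :=
  {w | memWs2 N s w ∧ ∀ᵐ x ∂(volume.restrict S1), w x = 0}

def pen (N : ℕ) (S2 : Set (EN N)) (φ : EN N → ℝ) (w : EN N → ℝ) : ℝ≥0∞ :=
  ∫⁻ x in S2, ENNReal.ofReal ((max (w x - φ x) 0) ^ 2)

/-- The `L²(Σ₂)`-penalized functional `J_ε`, with values in `EReal` (the penalty term may a
priori be infinite for a general element of `V₀`). -/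
def Jeps (N : ℕ) (s : ℝ) (Ω S2 : Set (EN N)) (f φ : EN N → ℝ) (ε : ℝ)
    (w : EN N → ℝ) : EReal :=
  (Jfun N s Ω f w : EReal) +
    ((ENNReal.ofReal (1 / (2 * ε ^ 2)) * pen N S2 φ w : ℝ≥0∞) : EReal)

private lemma CNs_pos' (N : ℕ) {s : ℝ} (hs0 : 0 < s) (hs1 : s < 1) : 0 < CNs N s := by
  have hN : (0:ℝ) ≤ N := Nat.cast_nonneg N
  have h1 : 0 < Real.Gamma ((2*s+N)/2) := Real.Gamma_pos_of_pos (by linarith)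
  have h2 : 0 < Real.Gamma (1-s) := Real.Gamma_pos_of_pos (by linarith)
  have h4 : (0:ℝ) < (4:ℝ) ^ s := Real.rpow_pos_of_pos (by norm_num) s
  have hπ : (0:ℝ) < Real.pi ^ ((N:ℝ)/2) := Real.rpow_pos_of_pos Real.pi_pos _
  exact div_pos (mul_pos (mul_pos hs0 h4) h1) (mul_pos hπ h2)

private lemma kernel_meas (N : ℕ) (s : ℝ) {w : EN N → ℝ} (hw : Measurable w) :
    Measurable fun p : EN N × EN N =>
      (w p.1 - w p.2)^2 / ‖p.1 - p.2‖ ^ ((N:ℝ) + 2*s) := by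
  fun_prop

private lemma setIntegral_eq (N : ℕ) (s : ℝ) {w : EN N → ℝ} (hw : Measurable w)
    (A : Set (EN N × EN N)) :
    ∫ p in A, (w p.1 - w p.2)^2 / ‖p.1 - p.2‖ ^ ((N:ℝ) + 2*s) =
      (∫⁻ p in A,
        ENNReal.ofReal ((w p.1 - w p.2)^2 / ‖p.1 - p.2‖ ^ ((N:ℝ) + 2*s))).toReal := by
  rw [MeasureTheory.integral_eq_lintegral_of_nonneg_ae
    (ae_of_all _ fun p => by positivity) (kernel_meas N s hw).aestronglyMeasurable]

private lemma min_conseq (N : ℕ) (s : ℝ) (Ω S1 S2 : Set (EN N)) (f φ : EN N → ℝ)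
    {w v : EN N → ℝ} (hv : v ∈ K0 N s S1 S2 φ)
    {ε : ℝ} (hε : 0 < ε)
    (hle : Jeps N s Ω S2 f φ ε w ≤ Jeps N s Ω S2 f φ ε v) :
    Jfun N s Ω f w ≤ Jfun N s Ω f v ∧
      pen N S2 φ w ≤ ENNReal.ofReal (2 * ε ^ 2 * (Jfun N s Ω f v - Jfun N s Ω f w)) := by
  have hpenv : pen N S2 φ v = 0 := by
    have h : ∀ᵐ x ∂(volume.restrict S2),
        ENNReal.ofReal ((max (v x - φ x) 0)^2) = 0 := by
      filter_upwards [hv.2.2] with x hx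
      have h1 : max (v x - φ x) 0 = 0 := max_eq_right (by linarith)
      simp [h1]
    calc pen N S2 φ v = ∫⁻ _x in S2, 0 ∂volume := lintegral_congr_ae h
    _ = 0 := lintegral_zero
  simp only [Jeps] at hle
  rw [hpenv, mul_zero, EReal.coe_ennreal_zero, add_zero] at hle
  set c : ℝ≥0∞ := ENNReal.ofReal (1 / (2 * ε ^ 2)) with hc
  have hc0 : c ≠ 0 := by
    rw [hc, ne_eq, ENNReal.ofReal_eq_zero, not_le]
    positivity
  have hctop : c ≠ ⊤ := ENNReal.ofReal_ne_top
  have hPtop : c * pen N S2 φ w ≠ ⊤ := by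
    intro h
    rw [h, EReal.coe_ennreal_top] at hle
    rw [EReal.add_top_iff_ne_bot.mpr (EReal.coe_ne_bot _)] at hle
    exact EReal.coe_ne_top _ (top_le_iff.mp hle)
  have hPcoe : ((c * pen N S2 φ w : ℝ≥0∞) : EReal)
      = (((c * pen N S2 φ w).toReal : ℝ) : EReal) := by
    nth_rewrite 1 [← ENNReal.ofReal_toReal hPtop]
    rw [EReal.coe_ennreal_ofReal, max_eq_left ENNReal.toReal_nonneg]
  rw [hPcoe, ← EReal.coe_add] at hle
  have hreal : Jfun N s Ω f w + (c * pen N S2 φ w).toReal ≤ Jfun N s Ω f v := by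
    exact_mod_cast hle
  have hPnn : 0 ≤ (c * pen N S2 φ w).toReal := ENNReal.toReal_nonneg
  refine ⟨by linarith, ?_⟩
  have hd0 : (0:ℝ) ≤ Jfun N s Ω f v - Jfun N s Ω f w := by linarith
  have hP_le : c * pen N S2 φ w ≤ ENNReal.ofReal (Jfun N s Ω f v - Jfun N s Ω f w) :=
    (ENNReal.le_ofReal_iff_toReal_le hPtop hd0).mpr (by linarith)
  have hcinv : c⁻¹ = ENNReal.ofReal (2 * ε ^ 2) := by
    rw [hc, one_div, ENNReal.ofReal_inv_of_pos (by positivity), inv_inv]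
  calc pen N S2 φ w = c⁻¹ * (c * pen N S2 φ w) := by
        rw [← mul_assoc, ENNReal.inv_mul_cancel hc0 hctop, one_mul]
  _ ≤ c⁻¹ * ENNReal.ofReal (Jfun N s Ω f v - Jfun N s Ω f w) := mul_le_mul_right hP_le _
  _ = ENNReal.ofReal (2 * ε ^ 2 * (Jfun N s Ω f v - Jfun N s Ω f w)) := by
      rw [hcinv, ← ENNReal.ofReal_mul (by positivity)]
private lemma poincare (N : ℕ) {s : ℝ} (hα : 0 < (N:ℝ) + 2*s) (Ω S1' : Set (EN N))
    (hΩmeas : MeasurableSet Ω) {R : ℝ} (hR : 0 < R)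
    (hΩR : Ω ⊆ Metric.ball 0 R) (hS1'ball : S1' ⊆ Metric.ball 0 R)
    (hS1'meas : MeasurableSet S1') (hS1'Ωc : S1' ⊆ Ωᶜ)
    {w : EN N → ℝ} (hw : Measurable w)
    (hw0 : ∀ᵐ x ∂(volume.restrict S1'), w x = 0) :
    (∫⁻ x in Ω, ENNReal.ofReal ((w x)^2)) *
      (ENNReal.ofReal (((2*R) ^ ((N:ℝ)+2*s))⁻¹) * volume S1') ≤
    ∫⁻ p in DSet N Ω, ENNReal.ofReal ((w p.1 - w p.2)^2 / ‖p.1 - p.2‖ ^ ((N:ℝ)+2*s)) := by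
  have hmono : (∫⁻ p in Ω ×ˢ S1',
        ENNReal.ofReal ((w p.1 - w p.2)^2 / ‖p.1 - p.2‖ ^ ((N:ℝ)+2*s)))
      ≤ ∫⁻ p in DSet N Ω,
        ENNReal.ofReal ((w p.1 - w p.2)^2 / ‖p.1 - p.2‖ ^ ((N:ℝ)+2*s)) := by
    apply lintegral_mono_set
    intro p hp
    exact Or.inl (Or.inr ⟨hp.1, hS1'Ωc hp.2⟩)
  refine le_trans ?_ hmono
  have hprod : (∫⁻ p in Ω ×ˢ S1',
        ENNReal.ofReal ((w p.1 - w p.2)^2 / ‖p.1 - p.2‖ ^ ((N:ℝ)+2*s)))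
      = ∫⁻ x in Ω, ∫⁻ y in S1',
          ENNReal.ofReal ((w x - w y)^2 / ‖x - y‖ ^ ((N:ℝ)+2*s)) := by
    rw [Measure.volume_eq_prod, ← Measure.prod_restrict,
      lintegral_prod _ ((kernel_meas N s hw).ennreal_ofReal).aemeasurable]
  rw [hprod]
  calc (∫⁻ x in Ω, ENNReal.ofReal ((w x)^2)) *
        (ENNReal.ofReal (((2*R) ^ ((N:ℝ)+2*s))⁻¹) * volume S1')
      = ∫⁻ x in Ω, ENNReal.ofReal ((w x)^2) *
          (ENNReal.ofReal (((2*R) ^ ((N:ℝ)+2*s))⁻¹) * volume S1') :=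
        (lintegral_mul_const _ ((hw.pow_const 2).ennreal_ofReal)).symm
  _ ≤ ∫⁻ x in Ω, ∫⁻ y in S1',
        ENNReal.ofReal ((w x - w y)^2 / ‖x - y‖ ^ ((N:ℝ)+2*s)) := by
      apply lintegral_mono_ae
      filter_upwards [ae_restrict_mem hΩmeas] with x hxΩ
      have hxball : ‖x‖ < R := mem_ball_zero_iff.mp (hΩR hxΩ)
      calc ENNReal.ofReal ((w x)^2) *
            (ENNReal.ofReal (((2*R) ^ ((N:ℝ)+2*s))⁻¹) * volume S1')
          = ENNReal.ofReal ((w x)^2 * ((2*R) ^ ((N:ℝ)+2*s))⁻¹) * volume S1' := by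
            rw [ENNReal.ofReal_mul (sq_nonneg _), mul_assoc]
      _ = ∫⁻ _y in S1', ENNReal.ofReal ((w x)^2 * ((2*R) ^ ((N:ℝ)+2*s))⁻¹) ∂volume :=
            (setLIntegral_const _ _).symm
      _ ≤ ∫⁻ y in S1', ENNReal.ofReal ((w x - w y)^2 / ‖x - y‖ ^ ((N:ℝ)+2*s)) := by
            apply lintegral_mono_ae
            filter_upwards [hw0, ae_restrict_mem hS1'meas] with y hy0 hyS1'
            apply ENNReal.ofReal_le_ofReal
            rw [hy0, sub_zero, ← div_eq_mul_inv]
            have hxy : x ≠ y := fun h => (hS1'Ωc hyS1') (h ▸ hxΩ)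
            have hpos : 0 < ‖x - y‖ := by
              rw [norm_sub_pos_iff]; exact hxy
            have hyball : ‖y‖ < R := mem_ball_zero_iff.mp (hS1'ball hyS1')
            have hle2R : ‖x - y‖ ≤ 2*R := by
              calc ‖x - y‖ ≤ ‖x‖ + ‖y‖ := norm_sub_le x y
              _ ≤ 2*R := by linarith
            have hrle : ‖x - y‖ ^ ((N:ℝ)+2*s) ≤ (2*R) ^ ((N:ℝ)+2*s) :=
              Real.rpow_le_rpow (norm_nonneg _) hle2R hα.le
            have hrpos : 0 < ‖x - y‖ ^ ((N:ℝ)+2*s) := Real.rpow_pos_of_pos hpos _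
            gcongr
private lemma holder {α : Type*} [MeasurableSpace α] (μ : Measure α) {f w : α → ℝ}
    (hf : MemLp f 2 μ) (hw : Measurable w) (hw2 : MemLp w 2 μ) :
    ∫ x, f x * w x ∂μ ≤
      Real.sqrt (∫⁻ x, ENNReal.ofReal (f x ^ 2) ∂μ).toReal *
      Real.sqrt (∫⁻ x, ENNReal.ofReal (w x ^ 2) ∂μ).toReal := by
  set Fl := ∫⁻ x, ENNReal.ofReal (f x ^ 2) ∂μ with hFl
  set Wl := ∫⁻ x, ENNReal.ofReal (w x ^ 2) ∂μ with hWl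
  have hFl_top : Fl ≠ ⊤ := (Integrable.lintegral_lt_top hf.integrable_sq).ne
  have hWl_top : Wl ≠ ⊤ := (Integrable.lintegral_lt_top hw2.integrable_sq).ne
  have hfm : AEMeasurable f μ := hf.aestronglyMeasurable.aemeasurable
  have h1 : ∫ x, f x * w x ∂μ ≤ ∫ x, |f x| * |w x| ∂μ := by
    refine le_trans (le_abs_self _) ?_
    simpa [Real.norm_eq_abs, abs_mul] using
      norm_integral_le_integral_norm (μ := μ) (fun x => f x * w x)
  have hm2 : AEStronglyMeasurable (fun x => |f x| * |w x|) μ := by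
    have := hf.aestronglyMeasurable.norm.mul hw.norm.aestronglyMeasurable
    simpa [Real.norm_eq_abs, Pi.mul_def] using this
  have h2 : ∫ x, |f x| * |w x| ∂μ = (∫⁻ x, ENNReal.ofReal (|f x| * |w x|) ∂μ).toReal := by
    rw [integral_eq_lintegral_of_nonneg_ae
      (ae_of_all _ fun x => mul_nonneg (abs_nonneg _) (abs_nonneg _)) hm2]
  have hconj : (2:ℝ).HolderConjugate 2 := Real.HolderConjugate.two_two
  have h3 : (∫⁻ x, ENNReal.ofReal (|f x| * |w x|) ∂μ) ≤ Fl ^ (1/2:ℝ) * Wl ^ (1/2:ℝ) := by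
    have hfabs : AEMeasurable (fun x => |f x|) μ := by
      have := hf.aestronglyMeasurable.norm.aemeasurable
      simpa [Real.norm_eq_abs] using this
    have hwabs : Measurable (fun x => |w x|) := by
      have := hw.norm
      simpa [Real.norm_eq_abs] using this
    have hH := ENNReal.lintegral_mul_le_Lp_mul_Lq μ hconj
      (f := fun x => ENNReal.ofReal |f x|) (g := fun x => ENNReal.ofReal |w x|)
      (ENNReal.measurable_ofReal.comp_aemeasurable hfabs)
      ((hwabs.ennreal_ofReal).aemeasurable)
    have e1 : ∀ x : α, ENNReal.ofReal (|f x| * |w x|)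
        = ENNReal.ofReal |f x| * ENNReal.ofReal |w x| := fun x => by
      rw [ENNReal.ofReal_mul (abs_nonneg _)]
    have e2 : ∀ (g : α → ℝ) (x : α), (ENNReal.ofReal |g x|) ^ (2:ℝ)
        = ENNReal.ofReal (g x ^ 2) := fun g x => by
      rw [ENNReal.ofReal_rpow_of_nonneg (abs_nonneg _) (by norm_num),
        show ((2:ℝ) = ((2:ℕ):ℝ)) by norm_num, Real.rpow_natCast, sq_abs]
    simp only [Pi.mul_apply] at hH
    calc (∫⁻ x, ENNReal.ofReal (|f x| * |w x|) ∂μ)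
        = ∫⁻ x, ENNReal.ofReal |f x| * ENNReal.ofReal |w x| ∂μ :=
          lintegral_congr fun x => e1 x
    _ ≤ (∫⁻ x, (ENNReal.ofReal |f x|) ^ (2:ℝ) ∂μ) ^ (1/2:ℝ) *
        (∫⁻ x, (ENNReal.ofReal |w x|) ^ (2:ℝ) ∂μ) ^ (1/2:ℝ) := hH
    _ = Fl ^ (1/2:ℝ) * Wl ^ (1/2:ℝ) := by
        rw [lintegral_congr fun x => e2 f x, lintegral_congr fun x => e2 w x]
  have hfin : Fl ^ (1/2:ℝ) * Wl ^ (1/2:ℝ) ≠ ⊤ :=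
    ENNReal.mul_ne_top (ENNReal.rpow_ne_top_of_nonneg (by norm_num) hFl_top)
      (ENNReal.rpow_ne_top_of_nonneg (by norm_num) hWl_top)
  calc ∫ x, f x * w x ∂μ ≤ (∫⁻ x, ENNReal.ofReal (|f x| * |w x|) ∂μ).toReal := h1.trans h2.le
  _ ≤ (Fl ^ (1/2:ℝ) * Wl ^ (1/2:ℝ)).toReal := ENNReal.toReal_mono hfin h3
  _ = Real.sqrt Fl.toReal * Real.sqrt Wl.toReal := by
      rw [ENNReal.toReal_mul, ← ENNReal.toReal_rpow, ← ENNReal.toReal_rpow,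
        Real.sqrt_eq_rpow, Real.sqrt_eq_rpow]

/-- uniform bound and constraint-violation estimate for the penalized
minimizers (proved within Proposition 4.1). -/
theorem stmt_15 (N : ℕ) (hN : 1 ≤ N) (Ω : Set (EN N)) (hΩo : IsOpen Ω)
    (hΩb : Bornology.IsBounded Ω) (s : ℝ) (hs : s ∈ Set.Ioo (0 : ℝ) 1)
    (S1 S2 : Set (EN N)) (hS1o : IsOpen S1) (hS2o : IsOpen S2)
    (hS1 : S1 ⊆ (closure Ω)ᶜ) (hS2 : S2 ⊆ (closure Ω)ᶜ)
    (hdisj : S1 ∩ S2 = ∅) (hcover : closure S1 ∪ closure S2 = Ωᶜ)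
    (hS1pos : 0 < volume S1)
    (f : EN N → ℝ) (hf : MemLp f 2 (volume.restrict Ω))
    (φ : EN N → ℝ) (hφ : Measurable φ)
    (hK0 : (K0 N s S1 S2 φ).Nonempty)
    (weps : ℝ → (EN N → ℝ))
    (hmin : ∀ ε : ℝ, 0 < ε → weps ε ∈ V0 N s S1 ∧
      ∀ v ∈ V0 N s S1, Jeps N s Ω S2 f φ ε (weps ε) ≤ Jeps N s Ω S2 f φ ε v) :
    (∀ v ∈ K0 N s S1 S2 φ, ∀ ε : ℝ, 0 < ε →
        pen N S2 φ (weps ε) ≤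
          ENNReal.ofReal (2 * ε ^ 2 * (Jfun N s Ω f v - Jfun N s Ω f (weps ε)))) ∧
    ∃ C > (0 : ℝ), ∀ ε : ℝ, 0 < ε → ε ≤ 1 →
      (∫⁻ p in DSet N Ω,
          ENNReal.ofReal ((weps ε p.1 - weps ε p.2) ^ 2 / ‖p.1 - p.2‖ ^ ((N : ℝ) + 2 * s)))
        ≤ ENNReal.ofReal C ∧
      pen N S2 φ (weps ε) ≤ ENNReal.ofReal (C * ε ^ 2) := by
  have hγ : 0 < CNs N s := CNs_pos' N hs.1 hs.2
  have hNnn : (0:ℝ) ≤ N := Nat.cast_nonneg N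
  have hα : 0 < (N:ℝ) + 2*s := by linarith [hs.1]
  have key : ∀ v ∈ K0 N s S1 S2 φ, ∀ ε : ℝ, 0 < ε →
      Jfun N s Ω f (weps ε) ≤ Jfun N s Ω f v ∧
        pen N S2 φ (weps ε) ≤
          ENNReal.ofReal (2 * ε ^ 2 * (Jfun N s Ω f v - Jfun N s Ω f (weps ε))) :=
    fun v hv ε hε => min_conseq N s Ω S1 S2 f φ hv hε
      ((hmin ε hε).2 v ⟨hv.1, hv.2.1⟩)
  refine ⟨fun v hv ε hε => (key v hv ε hε).2, ?_⟩
  obtain ⟨v₀, hv₀⟩ := hK0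
  obtain ⟨R₀, hR₀⟩ := hΩb.subset_ball 0
  have hex : ∃ n : ℕ, 0 < volume (S1 ∩ Metric.ball (0:EN N) (n:ℝ)) := by
    by_contra h
    push_neg at h
    have hcov : S1 ⊆ ⋃ n : ℕ, S1 ∩ Metric.ball (0:EN N) (n:ℝ) := by
      intro x hx
      obtain ⟨n, hn⟩ := exists_nat_gt ‖x‖
      exact mem_iUnion.mpr ⟨n, hx, mem_ball_zero_iff.mpr hn⟩
    have hz : volume S1 = 0 :=
      measure_mono_null hcov (measure_iUnion_null fun n => le_zero_iff.mp (h n))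
    exact absurd hz hS1pos.ne'
  obtain ⟨n, hn⟩ := hex
  set R : ℝ := max R₀ (n:ℝ) + 1 with hRdef
  have hnR : (n:ℝ) ≤ R := by
    have := le_max_right R₀ (n:ℝ); linarith
  have hR0R : R₀ ≤ R := by have := le_max_left R₀ (n:ℝ); linarith
  have hRpos : 0 < R := by
    have h0 : (0:ℝ) ≤ n := Nat.cast_nonneg n
    have h1 := le_max_right R₀ (n:ℝ)
    rw [hRdef]; linarith
  have hΩR : Ω ⊆ Metric.ball 0 R := hR₀.trans (Metric.ball_subset_ball hR0R)
  set S1' : Set (EN N) := S1 ∩ Metric.ball (0:EN N) R with hS1'def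
  have hS1'meas : MeasurableSet S1' := hS1o.measurableSet.inter measurableSet_ball
  have hS1'pos : 0 < volume S1' :=
    hn.trans_le (measure_mono (inter_subset_inter_right _ (Metric.ball_subset_ball hnR)))
  have hS1'fin : volume S1' < ⊤ :=
    (measure_mono inter_subset_right).trans_lt measure_ball_lt_top
  have hS1'Ωc : S1' ⊆ Ωᶜ := fun x hx => (compl_subset_compl.mpr subset_closure) (hS1 hx.1)
  have hS1'ball : S1' ⊆ Metric.ball 0 R := inter_subset_right
  set κ : ℝ≥0∞ := ENNReal.ofReal (((2*R) ^ ((N:ℝ)+2*s))⁻¹) * volume S1' with hκdef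
  have hκ0 : κ ≠ 0 := by
    apply mul_ne_zero _ hS1'pos.ne'
    rw [ne_eq, ENNReal.ofReal_eq_zero, not_le]
    positivity
  have hκtop : κ ≠ ⊤ := ENNReal.mul_ne_top ENNReal.ofReal_ne_top hS1'fin.ne
  set cr : ℝ := κ.toReal with hcrdef
  have hcrpos : 0 < cr := ENNReal.toReal_pos hκ0 hκtop
  set Fl : ℝ≥0∞ := ∫⁻ x in Ω, ENNReal.ofReal (f x ^ 2) with hFldef
  have hFl_top : Fl ≠ ⊤ := (Integrable.lintegral_lt_top hf.integrable_sq).ne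
  set M : ℝ := 2 * Fl.toReal / (CNs N s * cr) with hMdef
  have hMnn : 0 ≤ M :=
    div_nonneg (mul_nonneg two_pos.le ENNReal.toReal_nonneg) (mul_pos hγ hcrpos).le
  have coercive : ∀ w ∈ V0 N s S1,
      CNs N s/8 * (∫⁻ p in DSet N Ω, ENNReal.ofReal
          ((w p.1 - w p.2)^2 / ‖p.1 - p.2‖ ^ ((N:ℝ)+2*s))).toReal - M
        ≤ Jfun N s Ω f w := by
    intro w hw
    obtain ⟨⟨hwm, hwL2, hwG⟩, hw0⟩ := hw
    set Gl := ∫⁻ p in DSet N Ω, ENNReal.ofReal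
        ((w p.1 - w p.2)^2 / ‖p.1 - p.2‖ ^ ((N:ℝ)+2*s)) with hGldef
    have hGl_top : Gl ≠ ⊤ := ((setLIntegral_le_lintegral _ _).trans_lt hwG).ne
    have hgnn : (0:ℝ) ≤ Gl.toReal := ENNReal.toReal_nonneg
    have hJw : Jfun N s Ω f w = CNs N s/4 * Gl.toReal - ∫ x in Ω, f x * w x := by
      rw [hGldef]
      simp only [Jfun]
      rw [setIntegral_eq N s hwm]
    set Wl : ℝ≥0∞ := ∫⁻ x in Ω, ENNReal.ofReal (w x ^ 2) with hWldef
    have hw0' : ∀ᵐ x ∂(volume.restrict S1'), w x = 0 := by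
      rw [hS1'def]
      exact ae_restrict_of_ae_restrict_of_subset inter_subset_left hw0
    have hpoin := poincare N hα Ω S1' hΩo.measurableSet hRpos hΩR hS1'ball hS1'meas
      hS1'Ωc hwm hw0'
    have hL2r : Wl.toReal * cr ≤ Gl.toReal := by
      have h := ENNReal.toReal_mono hGl_top hpoin
      rw [ENNReal.toReal_mul] at h
      exact h
    have hHold := holder (volume.restrict Ω) hf hwm (hwL2.restrict Ω)
    set A := Real.sqrt Fl.toReal with hAdef
    set B := Real.sqrt Wl.toReal with hBdef
    have hA2 : A^2 = Fl.toReal := Real.sq_sqrt ENNReal.toReal_nonneg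
    have hB2 : B^2 = Wl.toReal := Real.sq_sqrt ENNReal.toReal_nonneg
    have hAnn : 0 ≤ A := Real.sqrt_nonneg _
    have hBnn : 0 ≤ B := Real.sqrt_nonneg _
    have hMeq : CNs N s * cr * M = 2 * A^2 := by
      rw [hA2, hMdef]
      field_simp
    have hkey2 : A * B ≤ CNs N s/8 * Gl.toReal + M := by
      have hcrB : cr * B^2 ≤ Gl.toReal := by rw [hB2]; linarith
      nlinarith [sq_nonneg (CNs N s * cr * B - 4*A), mul_pos hγ hcrpos,
        mul_le_mul_of_nonneg_left hcrB (le_of_lt (mul_pos (mul_pos hγ hγ) hcrpos))]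
    rw [hJw]
    have hfin := hHold.trans hkey2
    linarith
  set Jv₀ : ℝ := Jfun N s Ω f v₀ with hJv₀def
  set C : ℝ := max (max (2*(Jv₀ + M)) (8/CNs N s*(Jv₀ + M))) 0 + 1 with hCdef
  have hCpos : 0 < C := by
    have h0 := le_max_right (max (2*(Jv₀ + M)) (8/CNs N s*(Jv₀ + M))) (0:ℝ)
    rw [hCdef]; linarith
  refine ⟨C, hCpos, fun ε hε hε1 => ?_⟩
  obtain ⟨hwV0, -⟩ := hmin ε hε
  have hco := coercive (weps ε) hwV0
  have hJle := (key v₀ hv₀ ε hε).1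
  set Gl := ∫⁻ p in DSet N Ω, ENNReal.ofReal
      ((weps ε p.1 - weps ε p.2)^2 / ‖p.1 - p.2‖ ^ ((N:ℝ)+2*s)) with hGldef
  have hGl_top : Gl ≠ ⊤ := ((setLIntegral_le_lintegral _ _).trans_lt hwV0.1.2.2).ne
  have hgnn : (0:ℝ) ≤ Gl.toReal := ENNReal.toReal_nonneg
  have hgB : CNs N s/8 * Gl.toReal ≤ Jv₀ + M := by linarith
  have hmax1 := le_max_left (2*(Jv₀+M)) (8/CNs N s*(Jv₀+M))
  have hmax2 := le_max_right (2*(Jv₀+M)) (8/CNs N s*(Jv₀+M))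
  have hmax3 := le_max_left (max (2*(Jv₀+M)) (8/CNs N s*(Jv₀+M))) (0:ℝ)
  constructor
  · rw [← ENNReal.ofReal_toReal hGl_top]
    apply ENNReal.ofReal_le_ofReal
    have h8 : Gl.toReal ≤ 8/CNs N s*(Jv₀ + M) := by
      rw [div_mul_eq_mul_div, le_div_iff₀ hγ]
      nlinarith [hgB]
    rw [hCdef]; linarith
  · refine le_trans (key v₀ hv₀ ε hε).2 (ENNReal.ofReal_le_ofReal ?_)
    have hprod : 0 ≤ CNs N s/8 * Gl.toReal := mul_nonneg (by linarith) hgnn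
    have hJd : Jv₀ - Jfun N s Ω f (weps ε) ≤ Jv₀ + M := by linarith
    have h2C : 2*(Jv₀+M) ≤ C := by rw [hCdef]; linarith
    have h1 : 2*(Jv₀ - Jfun N s Ω f (weps ε)) ≤ C := by linarith
    calc 2 * ε ^ 2 * (Jv₀ - Jfun N s Ω f (weps ε))
        = ε ^ 2 * (2 * (Jv₀ - Jfun N s Ω f (weps ε))) := by ring
    _ ≤ ε ^ 2 * C := mul_le_mul_of_nonneg_left h1 (sq_nonneg ε)
    _ = C * ε ^ 2 := by ring

end
end

section
/- Theorem 4.4 (linear rate for the Sobolev-norm penalization, abstract Hilbert-space form): let V and H be real Hilbert spaces, E : V × V → ℝ a bilinear form with |E(u,v)| ≤ M·‖u‖_V·‖v‖_V and E(v,v) ≥ α·‖v‖_V² for some M, α > 0, f : V → ℝ a continuous linear functional, and R : V → H a continuous linear map admitting a bounded right inverse: there is c_R > 0 such that for every h ∈ H there is v ∈ V with R v = h and ‖v‖_V ≤ c_R·‖h‖_H. Let K ⊆ H be a nonempty closed convex cone with ⟨k₁, k₂⟩ ≥ 0 for all k₁, k₂ ∈ K; for h ∈ H let h⁺ denote the metric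 projection of h onto K and h⁻ := h − h⁺, and assume h⁻ ∈ −K for every h ∈ H. Let φ ∈ H, and suppose w ∈ V and λ ∈ H satisfy: ⟨λ, k⟩ ≥ 0 for all k ∈ K; E(w,v) + ⟨λ, R v⟩ = f(v) for all v ∈ V; R w − φ ∈ −K; and ⟨λ, R w − φ⟩ = 0. Given ξ > 0, suppose w_ξ ∈ V satisfies E(w_ξ, v) + ξ^{−1}·⟨(R w_ξ − φ)⁺, R v⟩ = f(v) for all v ∈ V, and set λ_ξ := ξ^{−1}·(R w_ξ − φ)⁺. Then there is a constant C > 0 depending only on M, α, c_R such that ‖w_ξ − w‖_V ≤ C·ξ·‖λ‖_H, ‖λ_ξ − λ‖_H ≤ C·ξ·‖λ‖_H, and ‖(R w_ξ − φ)⁺‖_H ≤ ξ·‖λ_ξ‖_H. -/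
set_option maxHeartbeats 1000000 in
/-- Theorem 4.4, abstract Hilbert-space form: linear rate for the
Sobolev-norm penalization, with a constant depending only on `M`, `α`, `c_R`. -/
theorem stmt_18 (M α cR : ℝ) (hM : 0 < M) (hα : 0 < α) (hcR : 0 < cR) :
    ∃ C > (0 : ℝ),
      ∀ (V H : Type)
        [NormedAddCommGroup V] [InnerProductSpace ℝ V] [CompleteSpace V]
        [NormedAddCommGroup H] [InnerProductSpace ℝ H] [CompleteSpace H],
        ∀ (E : V →ₗ[ℝ] V →ₗ[ℝ] ℝ) (f : V →L[ℝ] ℝ) (R : V →L[ℝ] H)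
          (K : Set H) (P : H → H) (φ : H) (w : V) (lam : H) (ξ : ℝ) (wξ : V),
        (∀ u v : V, |E u v| ≤ M * ‖u‖ * ‖v‖) →
        (∀ v : V, α * ‖v‖ ^ 2 ≤ E v v) →
        (∀ h : H, ∃ v : V, R v = h ∧ ‖v‖ ≤ cR * ‖h‖) →
        K.Nonempty → IsClosed K → Convex ℝ K →
        (∀ c : ℝ, 0 ≤ c → ∀ k ∈ K, c • k ∈ K) →
        (∀ k₁ ∈ K, ∀ k₂ ∈ K, (0 : ℝ) ≤ inner ℝ k₁ k₂) →
        (∀ h : H, P h ∈ K ∧ ∀ k ∈ K, ‖h - P h‖ ≤ ‖h - k‖) →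
        (∀ h : H, -(h - P h) ∈ K) →
        (∀ k ∈ K, (0 : ℝ) ≤ inner ℝ lam k) →
        (∀ v : V, E w v + (inner ℝ lam (R v) : ℝ) = f v) →
        -(R w - φ) ∈ K →
        (inner ℝ lam (R w - φ) : ℝ) = 0 →
        0 < ξ →
        (∀ v : V, E wξ v + ξ⁻¹ * (inner ℝ (P (R wξ - φ)) (R v) : ℝ) = f v) →
        ‖wξ - w‖ ≤ C * ξ * ‖lam‖ ∧
        ‖ξ⁻¹ • P (R wξ - φ) - lam‖ ≤ C * ξ * ‖lam‖ ∧
        ‖P (R wξ - φ)‖ ≤ ξ * ‖ξ⁻¹ • P (R wξ - φ)‖ := by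
  refine ⟨M * cR / α + M * cR * (M * cR) / α, by positivity, ?_⟩
  intro V H _ _ _ _ _ _ E f R K P φ w lam ξ wξ hEb hEc hRinv hKne hKcl hKconv
    hKcone hKpos hP hPneg hlamK hweq hwb hwlam hξ hwξeq
  set a : H := R wξ - φ with ha
  set b : H := R w - φ with hb
  set pa : H := P a with hpa
  obtain ⟨hpaK, hpamin⟩ := hP a
  have hξ0 : ξ ≠ 0 := ne_of_gt hξ
  -- 0 ∈ K
  obtain ⟨k0, hk0⟩ := hKne
  have hzeroK : (0 : H) ∈ K := by simpa using hKcone 0 le_rfl k0 hk0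
  -- variational inequality for the projection
  have hVI : ∀ k ∈ K, (inner ℝ (a - pa) (k - pa) : ℝ) ≤ 0 := by
    haveI : Nonempty K := ⟨⟨pa, hpaK⟩⟩
    rw [← norm_eq_iInf_iff_real_inner_le_zero hKconv hpaK]
    refine le_antisymm (le_ciInf fun k => hpamin k k.2)
      (ciInf_le (f := fun k : K => ‖a - (k : H)‖) ⟨(0 : ℝ), fun _ ⟨_, h⟩ => h ▸ norm_nonneg _⟩ ⟨pa, hpaK⟩)
  -- ⟪a - pa, pa⟫ = 0
  have hproj : (inner ℝ (a - pa) pa : ℝ) = 0 := by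
    have h1 : (0 : ℝ) ≤ inner ℝ (a - pa) pa := by
      have := hVI 0 hzeroK
      rw [zero_sub, inner_neg_right] at this
      linarith
    have h2 : (inner ℝ (a - pa) pa : ℝ) ≤ 0 := by
      have := hVI ((2 : ℝ) • pa) (hKcone 2 (by norm_num) pa hpaK)
      rwa [two_smul, add_sub_cancel_right] at this
    linarith
  have hpaa : (inner ℝ pa a : ℝ) = ‖pa‖ ^ 2 := by
    have h1 : (inner ℝ pa (a - pa) : ℝ) = 0 := by
      rw [real_inner_comm]; exact hproj
    rw [inner_sub_right] at h1
    have h2 : (inner ℝ pa pa : ℝ) = ‖pa‖ ^ 2 := real_inner_self_eq_norm_sq pa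
    linarith
  set lξ : H := ξ⁻¹ • pa with hlξ
  set d : V := wξ - w with hd
  -- difference of the two variational equalities
  have hdiff : ∀ v : V, E d v + (inner ℝ (lξ - lam) (R v) : ℝ) = 0 := by
    intro v
    have h1 := hweq v
    have h2 := hwξeq v
    have h3 : (inner ℝ (lξ - lam) (R v) : ℝ)
        = ξ⁻¹ * (inner ℝ pa (R v) : ℝ) - (inner ℝ lam (R v) : ℝ) := by
      rw [inner_sub_left, real_inner_smul_left]
    have h4 : E d v = E wξ v - E w v := by
      rw [hd, map_sub, LinearMap.sub_apply]
    rw [h3, h4]; linarith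
  -- bound for the multiplier difference
  have hB : ‖lξ - lam‖ ≤ M * cR * ‖d‖ := by
    obtain ⟨v, hv1, hv2⟩ := hRinv (lξ - lam)
    have h0 := hdiff v
    have h1 : (inner ℝ (lξ - lam) (R v) : ℝ) = ‖lξ - lam‖ ^ 2 := by
      rw [hv1, real_inner_self_eq_norm_sq]
    have h2 : ‖lξ - lam‖ ^ 2 ≤ M * ‖d‖ * ‖v‖ := by
      have hE := abs_le.mp (hEb d v)
      linarith [hE.1]
    have h3 : M * ‖d‖ * ‖v‖ ≤ M * ‖d‖ * (cR * ‖lξ - lam‖) :=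
      mul_le_mul_of_nonneg_left hv2 (by positivity)
    by_contra hcon
    push_neg at hcon
    have ht0 : 0 < ‖lξ - lam‖ := lt_of_le_of_lt (by positivity) hcon
    nlinarith [mul_lt_mul_of_pos_right hcon ht0]
  -- energy estimate
  have hRd : R d = a - b := by rw [hd, map_sub, ha, hb]; abel
  have hA1 : (inner ℝ lξ a : ℝ) = ξ * (inner ℝ lξ lξ : ℝ) := by
    rw [hlξ, real_inner_smul_left, real_inner_smul_left, real_inner_smul_right,
      hpaa, real_inner_self_eq_norm_sq]
    field_simp
  have hA2 : (inner ℝ lξ b : ℝ) ≤ 0 := by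
    have h1 : (0 : ℝ) ≤ inner ℝ pa (-b) := hKpos pa hpaK (-b) hwb
    rw [inner_neg_right] at h1
    rw [hlξ, real_inner_smul_left]
    have : (0 : ℝ) ≤ ξ⁻¹ := le_of_lt (inv_pos.mpr hξ)
    nlinarith
  have hA3 : (inner ℝ lam a : ℝ) ≤ ξ * (inner ℝ lam lξ : ℝ) := by
    have h1 : (0 : ℝ) ≤ inner ℝ lam (-(a - pa)) := hlamK _ (hPneg a)
    rw [inner_neg_right, inner_sub_right] at h1
    have h2 : ξ * (inner ℝ lam lξ : ℝ) = inner ℝ lam pa := by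
      rw [hlξ, real_inner_smul_right]
      field_simp
    rw [h2]; linarith
  have hmain : α * ‖d‖ ^ 2 ≤ ξ * ((inner ℝ (lam - lξ) lξ : ℝ)) := by
    have hEdd := hEc d
    have h0 := hdiff d
    rw [hRd] at h0
    have e1 : (inner ℝ (lξ - lam) (a - b) : ℝ)
        = (inner ℝ lξ (a - b) : ℝ) - (inner ℝ lam (a - b) : ℝ) := inner_sub_left _ _ _
    have e2 : (inner ℝ lξ (a - b) : ℝ) = (inner ℝ lξ a : ℝ) - (inner ℝ lξ b : ℝ) :=
      inner_sub_right _ _ _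
    have e3 : (inner ℝ lam (a - b) : ℝ) = (inner ℝ lam a : ℝ) - (inner ℝ lam b : ℝ) :=
      inner_sub_right _ _ _
    have e4 : (inner ℝ (lam - lξ) lξ : ℝ)
        = (inner ℝ lam lξ : ℝ) - (inner ℝ lξ lξ : ℝ) := inner_sub_left _ _ _
    rw [e4]; rw [e1, e2, e3] at h0
    nlinarith
  have hCS : (inner ℝ (lam - lξ) lξ : ℝ) ≤ ‖lξ - lam‖ * ‖lam‖ := by
    have h1 : (inner ℝ (lam - lξ) lξ : ℝ)
        = -(‖lam - lξ‖ ^ 2) + (inner ℝ (lam - lξ) lam : ℝ) := by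
      have : (inner ℝ (lam - lξ) (lξ - lam) : ℝ) = -(‖lam - lξ‖ ^ 2) := by
        rw [show lξ - lam = -(lam - lξ) by abel, inner_neg_right,
          real_inner_self_eq_norm_sq]
      calc (inner ℝ (lam - lξ) lξ : ℝ)
          = (inner ℝ (lam - lξ) (lξ - lam) : ℝ) + (inner ℝ (lam - lξ) lam : ℝ) := by
            rw [← inner_add_right]; congr 1; abel
        _ = -(‖lam - lξ‖ ^ 2) + (inner ℝ (lam - lξ) lam : ℝ) := by rw [this]
    have h2 : (inner ℝ (lam - lξ) lam : ℝ) ≤ ‖lam - lξ‖ * ‖lam‖ :=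
      real_inner_le_norm _ _
    rw [norm_sub_rev lξ lam]
    nlinarith [sq_nonneg ‖lam - lξ‖]
  -- combine
  have hnd : (0 : ℝ) ≤ ‖d‖ := norm_nonneg d
  have hnl : (0 : ℝ) ≤ ‖lam‖ := norm_nonneg lam
  have hkey : α * ‖d‖ ^ 2 ≤ ξ * (M * cR * ‖d‖) * ‖lam‖ := by
    have h1 : ξ * ((inner ℝ (lam - lξ) lξ : ℝ)) ≤ ξ * (‖lξ - lam‖ * ‖lam‖) :=
      mul_le_mul_of_nonneg_left hCS (le_of_lt hξ)
    have h2 : ξ * (‖lξ - lam‖ * ‖lam‖) ≤ ξ * ((M * cR * ‖d‖) * ‖lam‖) :=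
      mul_le_mul_of_nonneg_left (mul_le_mul_of_nonneg_right hB hnl) (le_of_lt hξ)
    calc α * ‖d‖ ^ 2 ≤ ξ * ((inner ℝ (lam - lξ) lξ : ℝ)) := hmain
      _ ≤ ξ * ((M * cR * ‖d‖) * ‖lam‖) := le_trans h1 h2
      _ = ξ * (M * cR * ‖d‖) * ‖lam‖ := by ring
  have h6 : α * ‖d‖ ≤ M * cR * ξ * ‖lam‖ := by
    rcases eq_or_lt_of_le hnd with h | h
    · rw [← h]; rw [mul_zero]; positivity
    · have h7 : (α * ‖d‖) * ‖d‖ ≤ (M * cR * ξ * ‖lam‖) * ‖d‖ := by linarith [hkey]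
      exact le_of_mul_le_mul_right h7 h
  have hd1 : ‖d‖ ≤ M * cR / α * ξ * ‖lam‖ := by
    have heq : M * cR / α * ξ * ‖lam‖ = M * cR * ξ * ‖lam‖ / α := by ring
    rw [heq, le_div_iff₀ hα]
    linarith [h6]
  refine ⟨?_, ?_, ?_⟩
  · have hpos : (0 : ℝ) ≤ M * cR * (M * cR) / α * (ξ * ‖lam‖) := by positivity
    have heq : (M * cR / α + M * cR * (M * cR) / α) * ξ * ‖lam‖
        = M * cR / α * ξ * ‖lam‖ + M * cR * (M * cR) / α * (ξ * ‖lam‖) := by ring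
    calc ‖wξ - w‖ = ‖d‖ := rfl
      _ ≤ M * cR / α * ξ * ‖lam‖ := hd1
      _ ≤ (M * cR / α + M * cR * (M * cR) / α) * ξ * ‖lam‖ := by
          rw [heq]; linarith
  · have h1 : ‖lξ - lam‖ ≤ M * cR * (M * cR / α * ξ * ‖lam‖) := by
      calc ‖lξ - lam‖ ≤ M * cR * ‖d‖ := hB
        _ ≤ M * cR * (M * cR / α * ξ * ‖lam‖) :=
          mul_le_mul_of_nonneg_left hd1 (by positivity)
    have h0 : (0 : ℝ) ≤ M * cR / α * (ξ * ‖lam‖) := by positivity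
    have heq : (M * cR / α + M * cR * (M * cR) / α) * ξ * ‖lam‖
        = M * cR * (M * cR / α * ξ * ‖lam‖) + M * cR / α * (ξ * ‖lam‖) := by ring
    calc ‖lξ - lam‖ ≤ M * cR * (M * cR / α * ξ * ‖lam‖) := h1
      _ ≤ (M * cR / α + M * cR * (M * cR) / α) * ξ * ‖lam‖ := by
          rw [heq]; linarith
  · rw [hlξ, norm_smul, Real.norm_eq_abs, abs_of_pos (inv_pos.mpr hξ)]
    rw [← mul_assoc, mul_inv_cancel₀ hξ0, one_mul]
end
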